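/- arXiv:1508.07393 — 4 statements merged into one kernel-verified Lean document; each statement's English description precedes it below -/
import Mathlib

section
/- If x ∈ Z_gⁿ is a balanced vector, then for any positive integer h there exists a balanced vector y ∈ Z_hⁿ such that x and y are pairwise balanced. -/
/-- Number of positions where vector `x` takes value `a`. -/
def countVal {n g : ℕ} (x : Fin n → Fin g) (a : Fin g) : ℕ :=
  (Finset.univ.filter (fun i => x i = a)).card

/-- A length-`n` vector over `Fin g` is balanced if each symbol occurs
`⌊n/g⌋` or `⌈n/g⌉` times. -/
def BalancedVec {n g : ℕ} (x : Fin n → Fin g) : Prop :=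
  ∀ a : Fin g, countVal x a = n / g ∨ countVal x a = (n + g - 1) / g

/-- Number of positions where `(x, y)` takes the value pair `(a, b)`. -/
def countPair {n g₁ g₂ : ℕ} (x : Fin n → Fin g₁) (y : Fin n → Fin g₂)
    (a : Fin g₁) (b : Fin g₂) : ℕ :=
  (Finset.univ.filter (fun i => x i = a ∧ y i = b)).card

/-- Two vectors are pairwise balanced if both are balanced and each pair of
symbols occurs `⌊n/(g₁g₂)⌋` or `⌈n/(g₁g₂)⌉` times. -/
def PairwiseBalancedVec {n g₁ g₂ : ℕ} (x : Fin n → Fin g₁) (y : Fin n → Fin g₂) : Prop :=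
  BalancedVec x ∧ BalancedVec y ∧
    ∀ (a : Fin g₁) (b : Fin g₂),
      countPair x y a b = n / (g₁ * g₂) ∨ countPair x y a b = (n + g₁ * g₂ - 1) / (g₁ * g₂)

/-- 2-qualitative independence. -/
def QI2 {n g₁ g₂ : ℕ} (x : Fin n → Fin g₁) (y : Fin n → Fin g₂) : Prop :=
  ∀ (a : Fin g₁) (b : Fin g₂), ∃ j : Fin n, x j = a ∧ y j = b

/-- 3-qualitative independence. -/
def QI3 {n g₁ g₂ g₃ : ℕ} (x : Fin n → Fin g₁) (y : Fin n → Fin g₂) (z : Fin n → Fin g₃) : Prop :=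
  ∀ (a : Fin g₁) (b : Fin g₂) (c : Fin g₃), ∃ j : Fin n, x j = a ∧ y j = b ∧ z j = c

section Helpers
open Finset

lemma ceil_div_le_iff (m d k : ℕ) (hd : 0 < d) : (m + d - 1) / d ≤ k ↔ m ≤ k * d := by
  rw [Nat.div_le_iff_le_mul_add_pred hd, mul_comm]
  omega

lemma ceil_le_floor_succ (m D : ℕ) (hD : 0 < D) : (m + D - 1) / D ≤ m / D + 1 := by
  rw [ceil_div_le_iff m D _ hD, add_mul, one_mul]
  have h1 := Nat.div_add_mod m D
  have h2 := Nat.mod_lt m hD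
  nlinarith

lemma ceil_ceil (n g h : ℕ) (hg : 0 < g) (hh : 0 < h) :
    ((n + g - 1) / g + h - 1) / h = (n + g * h - 1) / (g * h) := by
  apply le_antisymm
  · rw [ceil_div_le_iff _ _ _ hh, ceil_div_le_iff _ _ _ hg]
    have h1 : n ≤ ((n + g * h - 1) / (g * h)) * (g * h) :=
      (ceil_div_le_iff n (g * h) _ (Nat.mul_pos hg hh)).mp le_rfl
    calc n ≤ (n + g * h - 1) / (g * h) * (g * h) := h1
      _ = (n + g * h - 1) / (g * h) * h * g := by ring
  · rw [ceil_div_le_iff _ _ _ (Nat.mul_pos hg hh)]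
    have h1 : n ≤ ((n + g - 1) / g) * g := (ceil_div_le_iff n g _ hg).mp le_rfl
    have h2 : (n + g - 1) / g ≤ (((n + g - 1) / g + h - 1) / h) * h :=
      (ceil_div_le_iff _ h _ hh).mp le_rfl
    calc n ≤ (n + g - 1) / g * g := h1
      _ ≤ ((n + g - 1) / g + h - 1) / h * h * g := Nat.mul_le_mul_right g h2
      _ = ((n + g - 1) / g + h - 1) / h * (g * h) := by ring

lemma mod_inj_of_lt {h m1 m2 : ℕ} (hh : 0 < h) (hle : m1 ≤ m2) (hlt : m2 - m1 < h)
    (hm : m1 % h = m2 % h) : m1 = m2 := by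
  obtain ⟨t, ht⟩ := (Nat.modEq_iff_dvd' hle).mp hm
  rcases Nat.eq_zero_or_pos t with h0 | h0
  · subst h0; simp at ht; omega
  · have : h ≤ h * t := Nat.le_mul_of_pos_right h h0
    omega

lemma card_Ico_len_h (s h b : ℕ) (hh : 0 < h) (hb : b < h) :
    ((Finset.Ico s (s + h)).filter (fun m => m % h = b)).card = 1 := by
  rw [Finset.card_eq_one]
  have hr : s % h < h := Nat.mod_lt s hh
  set t : ℕ := if s % h ≤ b then b - s % h else b + h - s % h with hts
  have htlt : t < h := by rw [hts]; split <;> omega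
  have hw : (s + t) % h = b := by
    rw [Nat.add_mod, Nat.mod_eq_of_lt htlt]
    rcases le_or_gt (s % h) b with hc | hc
    · have he : s % h + t = b := by rw [hts, if_pos hc]; omega
      rw [he, Nat.mod_eq_of_lt hb]
    · have he : s % h + t = b + h := by rw [hts, if_neg (by omega)]; omega
      rw [he, Nat.add_mod_right, Nat.mod_eq_of_lt hb]
  refine ⟨s + t, ?_⟩
  apply Finset.eq_singleton_iff_unique_mem.mpr
  constructor
  · simp only [Finset.mem_filter, Finset.mem_Ico]
    exact ⟨⟨by omega, by omega⟩, hw⟩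
  · rintro m hm
    simp only [Finset.mem_filter, Finset.mem_Ico] at hm
    obtain ⟨⟨hm1, hm2⟩, hm3⟩ := hm
    rcases le_total m (s + t) with hle | hle
    · exact mod_inj_of_lt hh hle (by omega) (by rw [hm3, hw])
    · exact (mod_inj_of_lt hh hle (by omega) (by rw [hm3, hw])).symm

lemma count_mod_Icc (h b : ℕ) (hh : 0 < h) (hb : b < h) :
    ∀ c s, c / h ≤ ((Finset.Ico s (s + c)).filter (fun m => m % h = b)).card ∧
      ((Finset.Ico s (s + c)).filter (fun m => m % h = b)).card ≤ (c + h - 1) / h := by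
  intro c
  induction c using Nat.strong_induction_on with
  | _ c ih =>
    intro s
    rcases lt_or_ge c h with hch | hch
    · have hcard : ((Finset.Ico s (s + c)).filter (fun m => m % h = b)).card ≤ 1 := by
        apply Finset.card_le_one.mpr
        intro m1 hm1 m2 hm2
        simp only [Finset.mem_filter, Finset.mem_Ico] at hm1 hm2
        rcases le_total m1 m2 with hle | hle
        · exact mod_inj_of_lt hh hle (by omega) (by rw [hm1.2, hm2.2])
        · exact (mod_inj_of_lt hh hle (by omega) (by rw [hm1.2, hm2.2])).symm
      have hfl : c / h = 0 := Nat.div_eq_of_lt hch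
      rcases Nat.eq_zero_or_pos c with hc0 | hc0
      · subst hc0
        simp
      · have : 1 ≤ (c + h - 1) / h := (Nat.one_le_div_iff hh).mpr (by omega)
        omega
    · have hsplit : Finset.Ico s (s + c) = Finset.Ico s (s + h) ∪ Finset.Ico (s + h) (s + c) :=
        (Finset.Ico_union_Ico_eq_Ico (by omega) (by omega)).symm
      have hdisj : Disjoint ((Finset.Ico s (s + h)).filter (fun m => m % h = b))
          ((Finset.Ico (s + h) (s + c)).filter (fun m => m % h = b)) :=
        Finset.disjoint_filter_filter (Finset.Ico_disjoint_Ico_consecutive s (s + h) (s + c))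
      have hcs : ((Finset.Ico s (s + c)).filter (fun m => m % h = b)).card
          = 1 + ((Finset.Ico (s + h) (s + c)).filter (fun m => m % h = b)).card := by
        rw [hsplit, Finset.filter_union, Finset.card_union_of_disjoint hdisj,
          card_Ico_len_h s h b hh hb]
      have hrec := ih (c - h) (by omega) (s + h)
      have heq : s + c = (s + h) + (c - h) := by omega
      rw [heq] at hcs
      have hd1 : c / h = (c - h) / h + 1 := by
        conv_lhs => rw [show c = (c - h) + h by omega]
        rw [Nat.add_div_right _ hh]
      have hd2 : (c + h - 1) / h = ((c - h) + h - 1) / h + 1 := by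
        conv_lhs => rw [show c + h - 1 = ((c - h) + h - 1) + h by omega]
        rw [Nat.add_div_right _ hh]
      rw [heq]
      omega

lemma card_filter_fin_val {n : ℕ} (p : ℕ → Prop) [DecidablePred p] :
    (Finset.univ.filter (fun k : Fin n => p k.val)).card = ((Finset.range n).filter p).card := by
  rw [← Finset.card_map Fin.valEmbedding]
  congr 1
  ext m
  simp only [Finset.mem_map, Finset.mem_filter, Finset.mem_univ, true_and, Finset.mem_range,
    Fin.valEmbedding_apply]
  constructor
  · rintro ⟨k, hk, rfl⟩; exact ⟨k.isLt, hk⟩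
  · rintro ⟨hm, hp⟩; exact ⟨⟨m, hm⟩, hp, rfl⟩

lemma card_filter_perm {n : ℕ} (σ : Equiv.Perm (Fin n)) (p : Fin n → Prop) [DecidablePred p] :
    (Finset.univ.filter (fun k => p (σ k))).card = (Finset.univ.filter p).card := by
  rw [← Finset.card_map σ.toEmbedding]
  congr 1
  ext i
  simp only [Finset.mem_map, Finset.mem_filter, Finset.mem_univ, true_and,
    Equiv.coe_toEmbedding]
  constructor
  · rintro ⟨k, hk, rfl⟩; exact hk
  · intro hp; exact ⟨σ.symm i, by simpa using hp, by simp⟩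

lemma lower_fin {n : ℕ} {S : Finset (Fin n)} (hS : ∀ j k : Fin n, j ≤ k → k ∈ S → j ∈ S)
    (k : Fin n) : k ∈ S ↔ k.val < S.card := by
  constructor
  · intro hk
    have hsub : Finset.univ.filter (fun j : Fin n => j.val ≤ k.val) ⊆ S := by
      intro j hj
      simp only [Finset.mem_filter, Finset.mem_univ, true_and] at hj
      exact hS j k (by exact hj) hk
    have hcard : (Finset.univ.filter (fun j : Fin n => j.val ≤ k.val)).card = k.val + 1 := by
      rw [card_filter_fin_val (fun m => m ≤ k.val)]
      have : (Finset.range n).filter (fun m => m ≤ k.val) = Finset.range (k.val + 1) := by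
        ext m
        simp only [Finset.mem_filter, Finset.mem_range]
        have := k.isLt
        omega
      rw [this, Finset.card_range]
    have := Finset.card_le_card hsub
    omega
  · intro hk
    by_contra hk'
    have hsub : S ⊆ Finset.univ.filter (fun j : Fin n => j.val < k.val) := by
      intro j hj
      simp only [Finset.mem_filter, Finset.mem_univ, true_and]
      by_contra hjk
      exact hk' (hS k j (by omega) hj)
    have hcard : (Finset.univ.filter (fun j : Fin n => j.val < k.val)).card = k.val := by
      rw [card_filter_fin_val (fun m => m < k.val)]
      have : (Finset.range n).filter (fun m => m < k.val) = Finset.range k.val := by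
        ext m
        simp only [Finset.mem_filter, Finset.mem_range]
        have := k.isLt
        omega
      rw [this, Finset.card_range]
    have := Finset.card_le_card hsub
    omega
end Helpers

theorem stmt1 {n g : ℕ} (x : Fin n → Fin g) (hx : BalancedVec x) (h : ℕ) (hh : 0 < h) :
    ∃ y : Fin n → Fin h, BalancedVec y ∧ PairwiseBalancedVec x y := by
  rcases Nat.eq_zero_or_pos n with hn | hn
  · subst hn
    refine ⟨Fin.elim0, ?_, hx, ?_, ?_⟩
    · intro b; left; simp [countVal]
    · intro b; left; simp [countVal]
    · intro a b; left; simp [countPair]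
  have hg : 0 < g := by
    rcases Nat.eq_zero_or_pos g with hg0 | hg0
    · subst hg0; exact (x ⟨0, hn⟩).elim0
    · exact hg0
  set σ := Tuple.sort x with hσ
  have hmono : Monotone (x ∘ σ) := Tuple.monotone_sort x
  set y : Fin n → Fin h := fun i => ⟨((σ.symm i : Fin n) : ℕ) % h, Nat.mod_lt _ hh⟩ with hy
  have hyσ : ∀ (k : Fin n) (b : Fin h), y (σ k) = b ↔ (k : ℕ) % h = (b : ℕ) := by
    intro k b
    simp [hy, Fin.ext_iff]
  -- balancedness of y
  have hby : BalancedVec y := by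
    intro b
    have h1 : countVal y b = (Finset.univ.filter (fun k : Fin n => (k : ℕ) % h = (b : ℕ))).card := by
      unfold countVal
      rw [← card_filter_perm σ (fun i => y i = b)]
      congr 1
      apply Finset.filter_congr
      intro k _
      simpa using (hyσ k b)
    rw [h1, card_filter_fin_val (fun m => m % h = (b : ℕ))]
    have h2 : (Finset.range n).filter (fun m => m % h = (b : ℕ))
        = (Finset.Ico 0 (0 + n)).filter (fun m => m % h = (b : ℕ)) := by
      rw [zero_add, Finset.range_eq_Ico]
    rw [h2]
    have h3 := count_mod_Icc h (b : ℕ) hh b.isLt n 0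
    have h4 := ceil_le_floor_succ n h hh
    omega
  -- pairwise counts
  refine ⟨y, hby, hx, hby, ?_⟩
  intro a b
  set S1 : Finset (Fin n) := Finset.univ.filter (fun k => x (σ k) < a) with hS1
  set S2 : Finset (Fin n) := Finset.univ.filter (fun k => x (σ k) ≤ a) with hS2
  have hlow1 : ∀ j k : Fin n, j ≤ k → k ∈ S1 → j ∈ S1 := by
    intro j k hjk hk
    simp only [hS1, Finset.mem_filter, Finset.mem_univ, true_and] at hk ⊢
    exact lt_of_le_of_lt (hmono hjk) hk
  have hlow2 : ∀ j k : Fin n, j ≤ k → k ∈ S2 → j ∈ S2 := by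
    intro j k hjk hk
    simp only [hS2, Finset.mem_filter, Finset.mem_univ, true_and] at hk ⊢
    exact le_trans (hmono hjk) hk
  have hmem1 : ∀ k : Fin n, k ∈ S1 ↔ x (σ k) < a := by
    intro k; rw [hS1]; simp
  have hmem2 : ∀ k : Fin n, k ∈ S2 ↔ x (σ k) ≤ a := by
    intro k; rw [hS2]; simp
  have hks : ∀ k : Fin n, (x (σ k) = a ↔ S1.card ≤ (k : ℕ) ∧ (k : ℕ) < S2.card) := by
    intro k
    have h1 : x (σ k) < a ↔ (k : ℕ) < S1.card := by
      rw [← hmem1 k]; exact lower_fin hlow1 k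
    have h2 : x (σ k) ≤ a ↔ (k : ℕ) < S2.card := by
      rw [← hmem2 k]; exact lower_fin hlow2 k
    constructor
    · intro he
      refine ⟨?_, h2.mp (le_of_eq he)⟩
      by_contra hc
      push_neg at hc
      exact absurd (h1.mpr hc) (by simp [he])
    · rintro ⟨hc1, hc2⟩
      have hle : x (σ k) ≤ a := h2.mpr hc2
      have hnlt : ¬ x (σ k) < a := fun hl => by
        have := h1.mp hl
        omega
      exact le_antisymm hle (not_lt.mp hnlt)
  have hs12 : S2.card = S1.card + countVal x a := by
    have hu : S2 = S1 ∪ Finset.univ.filter (fun k => x (σ k) = a) := by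
      ext k
      rw [Finset.mem_union, hmem1 k, hmem2 k]
      simp only [Finset.mem_filter, Finset.mem_univ, true_and]
      exact le_iff_lt_or_eq
    have hdisj : Disjoint S1 (Finset.univ.filter (fun k => x (σ k) = a)) := by
      rw [Finset.disjoint_left]
      intro k hk1 hk2
      rw [hmem1 k] at hk1
      simp only [Finset.mem_filter, Finset.mem_univ, true_and] at hk2
      exact absurd hk2 (ne_of_lt hk1)
    rw [hu, Finset.card_union_of_disjoint hdisj, card_filter_perm σ (fun i => x i = a)]
    rfl
  have hs2n : S2.card ≤ n := le_trans (Finset.card_le_univ _) (by simp)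
  -- rewrite countPair as a count over an interval
  have hcp : countPair x y a b
      = ((Finset.Ico S1.card (S1.card + countVal x a)).filter (fun m => m % h = (b : ℕ))).card := by
    unfold countPair
    rw [← card_filter_perm σ (fun i => x i = a ∧ y i = b)]
    have he1 : Finset.univ.filter (fun k => x (σ k) = a ∧ y (σ k) = b)
        = Finset.univ.filter (fun k : Fin n =>
            (S1.card ≤ (k : ℕ) ∧ (k : ℕ) < S2.card) ∧ (k : ℕ) % h = (b : ℕ)) := by
      apply Finset.filter_congr
      intro k _
      rw [hks k, hyσ k b]
    rw [he1, card_filter_fin_val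
      (fun m => (S1.card ≤ m ∧ m < S2.card) ∧ m % h = (b : ℕ))]
    congr 1
    ext m
    simp only [Finset.mem_filter, Finset.mem_range, Finset.mem_Ico]
    constructor
    · rintro ⟨hmn, ⟨hm1, hm2⟩, hm3⟩
      exact ⟨⟨hm1, by omega⟩, hm3⟩
    · rintro ⟨⟨hm1, hm2⟩, hm3⟩
      exact ⟨by omega, ⟨hm1, by omega⟩, hm3⟩
  have hint := count_mod_Icc h (b : ℕ) hh b.isLt (countVal x a) S1.card
  rw [← hcp] at hint
  -- numeric conclusion
  have hgh : 0 < g * h := Nat.mul_pos hg hh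
  have hfloor_le : n / g ≤ countVal x a := by
    rcases hx a with he | he
    · omega
    · rw [he]; exact Nat.div_le_div_right (by omega)
  have hle_ceil : countVal x a ≤ (n + g - 1) / g := by
    rcases hx a with he | he
    · rw [he]; exact Nat.div_le_div_right (by omega)
    · omega
  have f1 : n / (g * h) ≤ countPair x y a b := by
    calc n / (g * h) = n / g / h := (Nat.div_div_eq_div_mul n g h).symm
      _ ≤ countVal x a / h := Nat.div_le_div_right hfloor_le
      _ ≤ countPair x y a b := hint.1
  have f2 : countPair x y a b ≤ (n + g * h - 1) / (g * h) := by
    calc countPair x y a b ≤ (countVal x a + h - 1) / h := hint.2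
      _ ≤ ((n + g - 1) / g + h - 1) / h := Nat.div_le_div_right (by omega)
      _ = (n + g * h - 1) / (g * h) := ceil_ceil n g h hg hh
  have f3 := ceil_le_floor_succ n (g * h) hgh
  omega
end

section
/- Let x₁ ∈ Z_{g₁}ⁿ and x₂ ∈ Z_{g₂}ⁿ be two pairwise balanced vectors. Then for any positive integer h with g₁g₂h ≤ n, there exists a balanced vector y ∈ Z_hⁿ such that x₁, x₂ and y are 3-qualitatively independent, x₁ and y are pairwise balanced, and x₂ and y are pairwise balanced. -/
open Finset

/-- `s` is `x / d` rounded down or up (see `roundsDiv_natCast_iff`). -/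
def RoundsDiv (d x s : ℤ) : Prop := |x - d * s| < d

namespace RoundsDiv

variable {d x s : ℤ}

lemma pos (h : RoundsDiv d x s) : 0 < d := (abs_nonneg _).trans_lt h

lemma le_of_mul_le {k : ℤ} (h : RoundsDiv d x s) (hk : d * k ≤ x) : k ≤ s := by
  have hd := h.pos
  have : d * k < d * (s + 1) := by rw [RoundsDiv, abs_lt] at h; linarith
  have := lt_of_mul_lt_mul_left this hd.le
  omega

lemma nonneg (h : RoundsDiv d x s) (hx : 0 ≤ x) : 0 ≤ s :=
  h.le_of_mul_le (by simpa using hx)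

lemma mul {k v : ℤ} (hs : RoundsDiv d x s) (hv : RoundsDiv k s v) : RoundsDiv (d * k) x v := by
  have hd := hs.pos
  rw [RoundsDiv, abs_lt] at *
  constructor <;> nlinarith

lemma of_sub {h s' : ℤ} (hs : RoundsDiv (h + 1) x s) (hs' : RoundsDiv h (x - s) s') :
    RoundsDiv (h + 1) x s' := by
  have hh := hs'.pos
  rw [RoundsDiv, abs_lt] at *
  have h1 : h * (s' - s) < 2 * h := by nlinarith
  have h2 : -(2 * h) < h * (s' - s) := by nlinarith
  have : s' - s < 2 := lt_of_mul_lt_mul_left (by linarith) hh.le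
  have : -2 < s' - s := lt_of_mul_lt_mul_left (by linarith) hh.le
  obtain h3 | h3 | h3 : s' = s - 1 ∨ s' = s ∨ s' = s + 1 := by omega
  all_goals subst h3; constructor <;> nlinarith

lemma neg (h : RoundsDiv d x s) : RoundsDiv d (-x) (-s) := by
  rwa [RoundsDiv, mul_neg, sub_neg_eq_add, ← abs_neg, neg_add, neg_neg, ← sub_eq_add_neg]

end RoundsDiv

lemma roundsDiv_natCast_iff {d x s : ℕ} (hd : 0 < d) :
    RoundsDiv d x s ↔ s = x / d ∨ s = (x + d - 1) / d := by
  have hlo : x / d ≤ s ↔ x < d * s + d := by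
    rw [← Nat.lt_succ_iff, Nat.div_lt_iff_lt_mul hd]; constructor <;> intro <;> linarith
  have hhi : s ≤ (x + d - 1) / d ↔ d * s < x + d := by
    rw [Nat.le_div_iff_mul_le hd, mul_comm]; omega
  have hceil : (x + d - 1) / d ≤ x / d + 1 := by
    rw [Nat.div_le_iff_le_mul_add_pred hd]
    have := Nat.lt_mul_div_succ x hd
    rw [mul_add] at *
    omega
  have hfloor : x / d ≤ (x + d - 1) / d := Nat.div_le_div_right (by omega)
  have hZ : RoundsDiv d x s ↔ x < d * s + d ∧ d * s < x + d := by
    rw [RoundsDiv, abs_lt]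
    constructor
    · rintro ⟨h1, h2⟩; constructor <;> (zify; linarith)
    · rintro ⟨h1, h2⟩; zify at h1 h2; constructor <;> linarith
  rw [hZ, ← hlo, ← hhi]
  omega

section Counting

variable {ι κ : Type*} [DecidableEq κ]

lemma sum_card_filter_and_eq [Fintype κ] (s : Finset ι) (p : ι → Prop) [DecidablePred p]
    (f : ι → κ) :
    ∑ k, #{i ∈ s | p i ∧ f i = k} = #{i ∈ s | p i} := by
  rw [card_eq_sum_card_fiberwise (f := f) (t := univ) (by simp)]
  simp only [filter_filter]

lemma sum_card_filter_eq_and [Fintype κ] (s : Finset ι) (p : ι → Prop) [DecidablePred p]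
    (f : ι → κ) :
    ∑ k, #{i ∈ s | f i = k ∧ p i} = #{i ∈ s | p i} := by
  simp only [and_comm (a := f _ = _), sum_card_filter_and_eq]

lemma card_filter_le_one_of_injOn {f : ℕ → κ} {k : ℕ} (hf : Set.InjOn f (Set.Iio k))
    (p : ℕ → Prop) [DecidablePred p] (b : κ) : #{t ∈ range k | p t ∧ f t = b} ≤ 1 :=
  card_le_one.2 fun s hs t ht => by
    simp only [mem_filter, mem_range] at hs ht
    exact hf hs.1 ht.1 (hs.2.2.trans ht.2.2.symm)

end Counting

lemma exists_ne_not_dvd_of_dvd_sum {ι R : Type*} [Fintype ι] [CommRing R]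
    {d : R} {f : ι → R} (hf : d ∣ ∑ i, f i) {i : ι} (hi : ¬ d ∣ f i) :
    ∃ j, j ≠ i ∧ ¬ d ∣ f j := by
  classical
  by_contra! h
  rw [← add_sum_erase _ _ (mem_univ i),
    dvd_add_left (dvd_sum fun j hj => h j (ne_of_mem_erase hj))] at hf
  exact hi hf

lemma Set.InjOn.comp_succ_of_eq {γ : Type*} {B : ℕ → γ} {k : ℕ}
    (hinj : Set.InjOn B (Set.Iio k)) (hk : 0 < k) (hclosed : B k = B 0) :
    Set.InjOn (fun t => B (t + 1)) (Set.Iio k) := by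
  intro s hs t ht hst
  simp only [Set.mem_Iio] at hs ht hst
  obtain hs' | hs' := (show s + 1 < k ∨ s + 1 = k by omega) <;>
    obtain ht' | ht' := (show t + 1 < k ∨ t + 1 = k by omega)
  · exact Nat.succ_injective (hinj hs' ht' hst)
  · rw [ht', hclosed] at hst
    exact absurd (hinj hs' hk hst) (by omega)
  · rw [hs', hclosed] at hst
    exact absurd (hinj hk ht' hst) (by omega)
  · omega

variable {α β : Type*}

lemma exists_alternating_walk {S : α → β → Prop}
    (hrow : ∀ a b, S a b → ∃ b', b' ≠ b ∧ S a b') (hcol : ∀ a b, S a b → ∃ a', a' ≠ a ∧ S a' b)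
    {a₀ : α} {b₀ : β} (h₀ : S a₀ b₀) :
    ∃ (A : ℕ → α) (B : ℕ → β),
      ∀ n, S (A n) (B n) ∧ S (A (n + 1)) (B n) ∧ A (n + 1) ≠ A n ∧ B (n + 1) ≠ B n := by
  have hstep : ∀ p : {p : α × β // S p.1 p.2}, ∃ q : {p : α × β // S p.1 p.2},
      S q.1.1 p.1.2 ∧ q.1.1 ≠ p.1.1 ∧ q.1.2 ≠ p.1.2 := by
    rintro ⟨⟨a, b⟩, hab⟩
    obtain ⟨a', ha', ha'b⟩ := hcol a b hab
    obtain ⟨b', hb', ha'b'⟩ := hrow a' b ha'b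
    exact ⟨⟨(a', b'), ha'b'⟩, ha'b, ha', hb'⟩
  choose next hnext using hstep
  set w : ℕ → {p : α × β // S p.1 p.2} := fun n => next^[n] ⟨(a₀, b₀), h₀⟩
  refine ⟨fun n => (w n).1.1, fun n => (w n).1.2, fun n => ?_⟩
  simp only [w, Function.iterate_succ_apply']
  exact ⟨(w n).2, hnext (w n)⟩

section Walk

variable [DecidableEq α] [DecidableEq β] {A : ℕ → α} {B : ℕ → β} {k : ℕ}

def walkMatrix (A : ℕ → α) (B : ℕ → β) (k : ℕ) (a : α) (b : β) : ℤ :=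
  (#{t ∈ range k | A (t + 1) = a ∧ B t = b} : ℤ) -
    #{t ∈ range k | A (t + 1) = a ∧ B (t + 1) = b}

lemma abs_walkMatrix_le_one (hinj : Set.InjOn B (Set.Iio k)) (hk : 0 < k) (hclosed : B k = B 0)
    (a : α) (b : β) : |walkMatrix A B k a b| ≤ 1 := by
  have := card_filter_le_one_of_injOn hinj (fun t => A (t + 1) = a) b
  have := card_filter_le_one_of_injOn (hinj.comp_succ_of_eq hk hclosed)
    (fun t => A (t + 1) = a) b
  simp only [walkMatrix, abs_le]
  omega

lemma walkMatrix_ne_zero (hA : A 2 ≠ A 1) (hB : B 1 ≠ B 0) (hk : 0 < k) (hclosed : B k = B 0)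
    (hinj : Set.InjOn B (Set.Iio k)) : walkMatrix A B k ≠ 0 := by
  have hk1 : 1 < k := by
    by_contra h
    exact hB (by rwa [show k = 1 by omega] at hclosed)
  have hP : 0 < #{t ∈ range k | A (t + 1) = A 2 ∧ B t = B 1} :=
    card_pos.2 ⟨1, by simp [hk1]⟩
  have hM : #{t ∈ range k | A (t + 1) = A 2 ∧ B (t + 1) = B 1} = 0 := by
    simp only [card_eq_zero, filter_eq_empty_iff, mem_range, not_and]
    intro t ht hAt hBt
    obtain rfl : t = 0 := hinj.comp_succ_of_eq hk hclosed ht hk hBt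
    exact hA hAt.symm
  intro h
  have := congrFun₂ h (A 2) (B 1)
  simp only [walkMatrix, hM, Pi.zero_apply] at this
  omega

lemma exists_of_walkMatrix_ne_zero {a : α} {b : β} (h : walkMatrix A B k a b ≠ 0) :
    ∃ t, A (t + 1) = a ∧ (B t = b ∨ B (t + 1) = b) := by
  by_contra! h'
  have h₁ : #{t ∈ range k | A (t + 1) = a ∧ B t = b} = 0 :=
    card_eq_zero.2 (filter_eq_empty_iff.2 fun t _ ht => (h' t ht.1).1 ht.2)
  have h₂ : #{t ∈ range k | A (t + 1) = a ∧ B (t + 1) = b} = 0 :=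
    card_eq_zero.2 (filter_eq_empty_iff.2 fun t _ ht => (h' t ht.1).2 ht.2)
  simp [walkMatrix, h₁, h₂] at h

end Walk

lemma add_mem_Icc_of_not_dvd {d : ℤ} {L U C : α → β → ℤ} (hL : ∀ a b, d ∣ L a b)
    (hU : ∀ a b, d ∣ U a b) (hC : C ∈ Set.Icc L U) {Z : α → β → ℤ} (hZ : ∀ a b, |Z a b| ≤ 1)
    (hsupp : ∀ a b, Z a b ≠ 0 → ¬ d ∣ C a b) : C + Z ∈ Set.Icc L U := by
  have key : ∀ a b, L a b ≤ C a b + Z a b ∧ C a b + Z a b ≤ U a b := by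
    intro a b
    have hLC : L a b ≤ C a b := hC.1 a b
    have hCU : C a b ≤ U a b := hC.2 a b
    by_cases hz : Z a b = 0
    · simpa [hz] using And.intro hLC hCU
    have hLC' : L a b ≠ C a b := fun h => hsupp a b hz (h ▸ hL a b)
    have hCU' : C a b ≠ U a b := fun h => hsupp a b hz (h ▸ hU a b)
    have := abs_le.1 (hZ a b)
    omega
  exact ⟨fun a b => (key a b).1, fun a b => (key a b).2⟩

section LineSums

variable [Fintype α] [Fintype β]

def HasZeroLineSums (Z : α → β → ℤ) : Prop := (∀ a, ∑ b, Z a b = 0) ∧ ∀ b, ∑ a, Z a b = 0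

lemma HasZeroLineSums.add {Z W : α → β → ℤ} (hZ : HasZeroLineSums Z)
    (hW : HasZeroLineSums W) : HasZeroLineSums (Z + W) :=
  ⟨fun a => by simp [sum_add_distrib, hZ.1 a, hW.1 a],
    fun b => by simp [sum_add_distrib, hZ.2 b, hW.2 b]⟩

lemma HasZeroLineSums.neg {Z : α → β → ℤ} (hZ : HasZeroLineSums Z) : HasZeroLineSums (-Z) :=
  ⟨fun a => by simp [hZ.1 a], fun b => by simp [hZ.2 b]⟩

lemma hasZeroLineSums_walkMatrix [DecidableEq α] [DecidableEq β] {A : ℕ → α} {B : ℕ → β}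
    {k : ℕ} (hclosed : B k = B 0) : HasZeroLineSums (walkMatrix A B k) := by
  refine ⟨fun a => ?_, fun b => ?_⟩ <;>
    simp only [walkMatrix, sum_sub_distrib, ← Nat.cast_sum, sum_card_filter_and_eq,
      sum_card_filter_eq_and, sub_self]
  rw [← sum_boole, ← sum_boole, ← sum_sub_distrib,
    sum_range_sub' (fun t => if B t = b then (1 : ℤ) else 0), hclosed, sub_self]

lemma exists_signed_cycle {S : α → β → Prop}
    (hrow : ∀ a b, S a b → ∃ b', b' ≠ b ∧ S a b') (hcol : ∀ a b, S a b → ∃ a', a' ≠ a ∧ S a' b)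
    {a₀ : α} {b₀ : β} (h₀ : S a₀ b₀) :
    ∃ Z : α → β → ℤ, Z ≠ 0 ∧ HasZeroLineSums Z ∧ (∀ a b, |Z a b| ≤ 1) ∧
      ∀ a b, Z a b ≠ 0 → S a b := by
  classical
  obtain ⟨A, B, hwalk⟩ := exists_alternating_walk hrow hcol h₀
  have hrep : ∃ j, ∃ i < j, B i = B j := by
    obtain ⟨i, j, hij, h⟩ := Finite.exists_ne_map_eq_of_infinite B
    rcases hij.lt_or_gt with hij | hij
    exacts [⟨j, i, hij, h⟩, ⟨i, j, hij, h.symm⟩]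
  obtain ⟨i, hi, hBi⟩ := Nat.find_spec hrep
  set A' := fun n => A (i + n)
  set B' := fun n => B (i + n)
  set k := Nat.find hrep - i
  have hk : 0 < k := by omega
  have hclosed : B' k = B' 0 := by simp only [B', k, Nat.add_sub_cancel' hi.le, add_zero, hBi]
  have hinj : Set.InjOn B' (Set.Iio k) := by
    intro s hs t ht hst
    simp only [Set.mem_Iio, k] at hs ht
    by_contra hne
    rcases lt_or_gt_of_ne hne with h | h
    · exact Nat.find_min hrep (by omega : i + t < Nat.find hrep) ⟨i + s, by omega, hst⟩
    · exact Nat.find_min hrep (by omega : i + s < Nat.find hrep) ⟨i + t, by omega, hst.symm⟩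
  refine ⟨walkMatrix A' B' k,
    walkMatrix_ne_zero (hwalk (i + 1)).2.2.1 (hwalk i).2.2.2 hk hclosed hinj,
    hasZeroLineSums_walkMatrix hclosed, abs_walkMatrix_le_one hinj hk hclosed, fun a b hab => ?_⟩
  obtain ⟨t, rfl, rfl | rfl⟩ := exists_of_walkMatrix_ne_zero hab
  exacts [(hwalk (i + t)).2.1, (hwalk (i + t + 1)).1]

def boxPotential (L U C : α → β → ℤ) : ℤ := ∑ a, ∑ b, (C a b - L a b) * (U a b - C a b)

variable {d : ℤ} {L U C : α → β → ℤ}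

lemma boxPotential_nonneg (hC : C ∈ Set.Icc L U) : 0 ≤ boxPotential L U C :=
  sum_nonneg fun a _ => sum_nonneg fun b _ =>
    mul_nonneg (sub_nonneg.2 (hC.1 a b)) (sub_nonneg.2 (hC.2 a b))

lemma boxPotential_add_add_boxPotential_sub (Z : α → β → ℤ) :
    boxPotential L U (C + Z) + boxPotential L U (C - Z) =
      2 * boxPotential L U C - 2 * ∑ a, ∑ b, Z a b ^ 2 := by
  simp only [boxPotential, ← sum_add_distrib, mul_sum, ← sum_sub_distrib, Pi.add_apply,
    Pi.sub_apply]
  exact sum_congr rfl fun a _ => sum_congr rfl fun b _ => by ring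

lemma exists_boxPotential_lt (hL : ∀ a b, d ∣ L a b) (hU : ∀ a b, d ∣ U a b)
    (hC : HasZeroLineSums C) (hCI : C ∈ Set.Icc L U) {a₀ : α} {b₀ : β} (h₀ : ¬ d ∣ C a₀ b₀) :
    ∃ C', HasZeroLineSums C' ∧ C' ∈ Set.Icc L U ∧
      boxPotential L U C' < boxPotential L U C := by
  obtain ⟨Z, hZ0, hZ, hZ1, hZC⟩ := exists_signed_cycle (S := fun a b => ¬ d ∣ C a b)
    (fun a _ h => exists_ne_not_dvd_of_dvd_sum (hC.1 a ▸ dvd_zero d) h)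
    (fun _ b h => exists_ne_not_dvd_of_dvd_sum (hC.2 b ▸ dvd_zero d) h) h₀
  have hpos : 0 < ∑ a, ∑ b, Z a b ^ 2 := by
    obtain ⟨a, b, hab⟩ : ∃ a b, Z a b ≠ 0 := by
      by_contra! h
      exact hZ0 (funext₂ h)
    exact sum_pos' (fun _ _ => sum_nonneg fun _ _ => sq_nonneg _)
      ⟨a, mem_univ a, sum_pos' (fun _ _ => sq_nonneg _) ⟨b, mem_univ b, by positivity⟩⟩
  have hsum := boxPotential_add_add_boxPotential_sub (L := L) (U := U) (C := C) Z
  by_cases hlt : boxPotential L U (C + Z) < boxPotential L U C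
  · exact ⟨C + Z, hC.add hZ, add_mem_Icc_of_not_dvd hL hU hCI hZ1 hZC, hlt⟩
  · refine ⟨C - Z, sub_eq_add_neg C Z ▸ hC.add hZ.neg, ?_, by linarith⟩
    rw [sub_eq_add_neg]
    exact add_mem_Icc_of_not_dvd hL hU hCI (fun a b => by simpa using hZ1 a b)
      (fun a b h => hZC a b (by simpa using h))

theorem exists_dvd_mem_Icc (hL : ∀ a b, d ∣ L a b) (hU : ∀ a b, d ∣ U a b)
    (hC : HasZeroLineSums C) (hCI : C ∈ Set.Icc L U) :
    ∃ C' ∈ Set.Icc L U, HasZeroLineSums C' ∧ ∀ a b, d ∣ C' a b := by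
  induction hN : (boxPotential L U C).toNat using Nat.strong_induction_on generalizing C with
  | _ N ih =>
    by_cases hdvd : ∀ a b, d ∣ C a b
    · exact ⟨C, hCI, hC, hdvd⟩
    simp only [not_forall] at hdvd
    obtain ⟨a₀, b₀, h₀⟩ := hdvd
    obtain ⟨C', hC', hC'I, hlt⟩ := exists_boxPotential_lt hL hU hC hCI h₀
    have := boxPotential_nonneg hC'I
    exact ih _ (by omega) hC' hC'I rfl

theorem exists_roundsDiv_of_hasZeroLineSums (hd : 0 < d) (hC : HasZeroLineSums C) :
    ∃ S : α → β → ℤ, HasZeroLineSums S ∧ ∀ a b, RoundsDiv d (C a b) (S a b) := by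
  -- `d * (x / d)` and `-(d * (-x / d))` are `x` rounded down and up to multiples of `d`
  obtain ⟨C', hC'I, hC', hdvd⟩ := exists_dvd_mem_Icc (L := fun a b => d * (C a b / d))
    (U := fun a b => -(d * (-C a b / d))) (fun _ _ => dvd_mul_right _ _)
    (fun _ _ => (dvd_mul_right _ _).neg_right) hC
    ⟨fun a b => Int.mul_ediv_self_le hd.ne',
      fun a b => le_neg_of_le_neg (Int.mul_ediv_self_le hd.ne')⟩
  choose S hS using hdvd
  refine ⟨S, ⟨fun a => ?_, fun b => ?_⟩, fun a b => ?_⟩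
  · have := hC'.1 a
    simp only [hS, ← mul_sum] at this
    exact (mul_eq_zero.1 this).resolve_left hd.ne'
  · have := hC'.2 b
    simp only [hS, ← mul_sum] at this
    exact (mul_eq_zero.1 this).resolve_left hd.ne'
  · have h₁ : d * (C a b / d) ≤ d * S a b := hS a b ▸ hC'I.1 a b
    have h₂ : d * S a b ≤ -(d * (-C a b / d)) := hS a b ▸ hC'I.2 a b
    have h₃ := Int.lt_mul_ediv_self_add (x := C a b) hd
    have h₄ := Int.lt_mul_ediv_self_add (x := -C a b) hd
    rw [RoundsDiv, abs_lt]
    constructor <;> linarith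

def bordered (m : α → β → ℤ) : Option α → Option β → ℤ
  | some a, some b => m a b
  | some a, none => -∑ b, m a b
  | none, some b => -∑ a, m a b
  | none, none => ∑ a, ∑ b, m a b

lemma hasZeroLineSums_bordered (m : α → β → ℤ) : HasZeroLineSums (bordered m) := by
  refine ⟨?_, ?_⟩ <;> rintro (_ | _) <;> simp only [bordered, Fintype.sum_option]
  · rw [sum_comm]; simp
  · simp
  · simp
  · simp

structure IsBalancedRounding (d : ℤ) (m s : α → β → ℤ) : Prop where
  cell : ∀ a b, RoundsDiv d (m a b) (s a b)
  row : ∀ a, RoundsDiv d (∑ b, m a b) (∑ b, s a b)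
  col : ∀ b, RoundsDiv d (∑ a, m a b) (∑ a, s a b)
  total : RoundsDiv d (∑ a, ∑ b, m a b) (∑ a, ∑ b, s a b)

lemma IsBalancedRounding.of_sub {h : ℤ} {m s s' : α → β → ℤ}
    (hs : IsBalancedRounding (h + 1) m s) (hs' : IsBalancedRounding h (m - s) s') :
    IsBalancedRounding (h + 1) m s' where
  cell a b := (hs.cell a b).of_sub (hs'.cell a b)
  row a := (hs.row a).of_sub (by simpa [sum_sub_distrib] using hs'.row a)
  col b := (hs.col b).of_sub (by simpa [sum_sub_distrib] using hs'.col b)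
  total := hs.total.of_sub (by simpa [sum_sub_distrib] using hs'.total)

theorem exists_isBalancedRounding {d : ℤ} (hd : 0 < d) (m : α → β → ℤ) :
    ∃ s, IsBalancedRounding d m s := by
  obtain ⟨S, hS, hSm⟩ := exists_roundsDiv_of_hasZeroLineSums hd (hasZeroLineSums_bordered m)
  have hrow : ∀ a, ∑ b, S (some a) (some b) = -S (some a) none := fun a => by
    have := hS.1 (some a); rw [Fintype.sum_option] at this; linarith
  have hcol : ∀ b, ∑ a, S (some a) (some b) = -S none (some b) := fun b => by
    have := hS.2 (some b); rw [Fintype.sum_option] at this; linarith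
  have htot : ∑ a, ∑ b, S (some a) (some b) = S none none := by
    have := hS.2 none
    rw [Fintype.sum_option] at this
    simp only [hrow, sum_neg_distrib]
    linarith
  refine ⟨fun a b => S (some a) (some b),
    ⟨fun a b => hSm (some a) (some b), fun a => ?_, fun b => ?_, ?_⟩⟩
  · rw [hrow]
    exact neg_neg (∑ b, m a b) ▸ (hSm (some a) none).neg
  · rw [hcol]
    exact neg_neg (∑ a, m a b) ▸ (hSm none (some b)).neg
  · rw [htot]
    exact hSm none none

theorem exists_isBalancedRounding_partition (m : α → β → ℤ) {h : ℕ} (hh : 0 < h) :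
    ∃ t : Fin h → α → β → ℤ, ∑ c, t c = m ∧ ∀ c, IsBalancedRounding h m (t c) := by
  induction h, hh using Nat.le_induction generalizing m with
  | base => exact ⟨fun _ => m, by simp, fun _ => ⟨by simp [RoundsDiv], by simp [RoundsDiv],
      by simp [RoundsDiv], by simp [RoundsDiv]⟩⟩
  | succ h hh ih =>
    obtain ⟨s, hs⟩ := exists_isBalancedRounding (d := h + 1) (by positivity) m
    obtain ⟨t, ht, ht'⟩ := ih (m - s)
    refine ⟨Fin.cons s t, by simp [Fin.sum_univ_succ, ht], Fin.cases ?_ fun c => ?_⟩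
    · simpa using hs
    · simpa using hs.of_sub (ht' c)

end LineSums

section Fibers

variable {ι κ γ : Type*} [Fintype ι] [Fintype γ] [DecidableEq γ]

lemma exists_fun_card_fiber_eq (t : γ → ℕ) (ht : Fintype.card ι = ∑ c, t c) :
    ∃ y : ι → γ, ∀ c, #{i | y i = c} = t c := by
  let e : ι ≃ Σ c, Fin (t c) := Fintype.equivOfCardEq (by simp [ht])
  refine ⟨fun i => (e i).1, fun c => ?_⟩
  rw [card_equiv e (t := {p : Σ c, Fin (t c) | p.1 = c}) (by simp), ← card_fin (t c),
    ← card_map (Function.Embedding.sigmaMk (β := fun c => Fin (t c)) c)]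
  congr 1
  ext ⟨c', j⟩
  simp only [mem_filter, mem_univ, true_and, mem_map, Function.Embedding.sigmaMk_apply]
  constructor
  · rintro rfl
    exact ⟨j, rfl⟩
  · rintro ⟨j, h⟩
    exact congrArg Sigma.fst h.symm

lemma exists_fun_card_fiber_eq_on_fibers [DecidableEq κ] (f : ι → κ) (t : κ → γ → ℕ)
    (ht : ∀ k, #{i | f i = k} = ∑ c, t k c) :
    ∃ y : ι → γ, ∀ k c, #{i | f i = k ∧ y i = c} = t k c := by
  choose y hy using fun k => exists_fun_card_fiber_eq (ι := {i // f i = k}) (t k)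
    (by rw [Fintype.card_subtype]; exact ht k)
  refine ⟨fun i => y (f i) ⟨i, rfl⟩, fun k c => ?_⟩
  rw [← hy k c]
  refine card_bij (fun i hi => ⟨i, (mem_filter.1 hi).2.1⟩) ?_ ?_ ?_
  · intro i hi
    obtain ⟨rfl, h⟩ := (mem_filter.1 hi).2
    simpa using h
  · intro i _ j _ h
    exact congrArg Subtype.val h
  · rintro ⟨i, rfl⟩ hi
    exact ⟨i, by simpa using hi, rfl⟩

end Fibers

section Vectors

variable {n g₁ g₂ h : ℕ}

def countTriple {g₃ : ℕ} (x : Fin n → Fin g₁) (y : Fin n → Fin g₂) (z : Fin n → Fin g₃)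
    (a : Fin g₁) (b : Fin g₂) (c : Fin g₃) : ℕ :=
  #{i | x i = a ∧ y i = b ∧ z i = c}

lemma sum_countPair_right (x : Fin n → Fin g₁) (y : Fin n → Fin g₂) (a : Fin g₁) :
    ∑ b, countPair x y a b = countVal x a :=
  sum_card_filter_and_eq _ _ _

lemma sum_countPair_left (x : Fin n → Fin g₁) (y : Fin n → Fin g₂) (b : Fin g₂) :
    ∑ a, countPair x y a b = countVal y b :=
  sum_card_filter_eq_and _ _ _

lemma sum_countVal (x : Fin n → Fin g₁) : ∑ a, countVal x a = n := by
  simp only [countVal]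
  rw [← card_eq_sum_card_fiberwise fun i _ => mem_univ (x i), card_univ, Fintype.card_fin]

lemma sum_countTriple_middle {g₃ : ℕ} (x : Fin n → Fin g₁) (y : Fin n → Fin g₂)
    (z : Fin n → Fin g₃) (a : Fin g₁) (c : Fin g₃) :
    ∑ b, countTriple x y z a b c = countPair x z a c := by
  rw [countPair, ← sum_card_filter_and_eq _ _ y]
  refine sum_congr rfl fun b _ => congrArg card (filter_congr fun i _ => by tauto)

lemma sum_countTriple_left {g₃ : ℕ} (x : Fin n → Fin g₁) (y : Fin n → Fin g₂)
    (z : Fin n → Fin g₃) (b : Fin g₂) (c : Fin g₃) :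
    ∑ a, countTriple x y z a b c = countPair y z b c := by
  rw [countPair, ← sum_card_filter_eq_and _ _ x]
  refine sum_congr rfl fun a _ => congrArg card (filter_congr fun i _ => by tauto)

theorem exists_isBalancedRounding_countTriple (x₁ : Fin n → Fin g₁) (x₂ : Fin n → Fin g₂)
    (hh : 0 < h) : ∃ y : Fin n → Fin h, ∀ c, IsBalancedRounding h
      (fun a b => countPair x₁ x₂ a b) (fun a b => countTriple x₁ x₂ y a b c) := by
  obtain ⟨t, ht, hbal⟩ :=
    exists_isBalancedRounding_partition (fun a b => (countPair x₁ x₂ a b : ℤ)) hh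
  have ht_nonneg : ∀ c a b, 0 ≤ t c a b :=
    fun c a b => ((hbal c).cell a b).nonneg (by positivity)
  have ht_sum : ∀ a b, ∑ c, (t c a b).toNat = countPair x₁ x₂ a b := fun a b => by
    have := congrFun₂ ht a b
    simp only [Finset.sum_apply] at this
    zify
    simpa [ht_nonneg] using this
  obtain ⟨y, hy⟩ := exists_fun_card_fiber_eq_on_fibers (fun i => (x₁ i, x₂ i))
    (fun k c => (t c k.1 k.2).toNat) fun k => by
      rw [ht_sum, countPair]
      simp [Prod.ext_iff]
  refine ⟨y, fun c => ?_⟩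
  convert hbal c using 3 with a b
  have := hy (a, b) c
  simp only [Prod.ext_iff, and_assoc] at this
  rw [countTriple, this, Int.toNat_of_nonneg (ht_nonneg c a b)]

theorem exists_balanced_extension (x₁ : Fin n → Fin g₁) (x₂ : Fin n → Fin g₂) (hh : 0 < h) :
    ∃ y : Fin n → Fin h, ∀ c,
      (∀ a b, RoundsDiv h (countPair x₁ x₂ a b) (countTriple x₁ x₂ y a b c)) ∧
      (∀ a, RoundsDiv h (countVal x₁ a) (countPair x₁ y a c)) ∧
      (∀ b, RoundsDiv h (countVal x₂ b) (countPair x₂ y b c)) ∧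
      RoundsDiv h n (countVal y c) := by
  obtain ⟨y, hy⟩ := exists_isBalancedRounding_countTriple x₁ x₂ hh
  refine ⟨y, fun c => ⟨(hy c).cell, fun a => ?_, fun b => ?_, ?_⟩⟩
  · simpa only [← Nat.cast_sum, sum_countPair_right, sum_countTriple_middle] using (hy c).row a
  · simpa only [← Nat.cast_sum, sum_countPair_left, sum_countTriple_left] using (hy c).col b
  · simpa only [← Nat.cast_sum, sum_countPair_right, sum_countVal, sum_countTriple_middle,
      sum_countPair_left] using (hy c).total

end Vectors

theorem stmt2 {n g₁ g₂ : ℕ} (x₁ : Fin n → Fin g₁) (x₂ : Fin n → Fin g₂)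
    (hpb : PairwiseBalancedVec x₁ x₂) (h : ℕ) (hh : 0 < h) (hn : g₁ * g₂ * h ≤ n) :
    ∃ y : Fin n → Fin h, BalancedVec y ∧ QI3 x₁ x₂ y ∧
      PairwiseBalancedVec x₁ y ∧ PairwiseBalancedVec x₂ y := by
  obtain ⟨y, hy⟩ := exists_balanced_extension x₁ x₂ hh
  have hy_bal : BalancedVec y := fun c => (roundsDiv_natCast_iff hh).1 (hy c).2.2.2
  refine ⟨y, hy_bal, fun a b c => ?_, ⟨hpb.1, hy_bal, fun a c => ?_⟩,
    ⟨hpb.2.1, hy_bal, fun b c => ?_⟩⟩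
  · have hab : RoundsDiv (g₁ * g₂ : ℕ) n (countPair x₁ x₂ a b) :=
      (roundsDiv_natCast_iff (Nat.mul_pos a.pos b.pos)).2 (hpb.2.2 a b)
    have hpos : (1 : ℤ) ≤ countTriple x₁ x₂ y a b c :=
      ((hy c).1 a b).le_of_mul_le
        (by linarith [hab.le_of_mul_le (k := h) (by exact_mod_cast hn)])
    obtain ⟨j, hj⟩ := card_pos.1 (by exact_mod_cast hpos : 0 < countTriple x₁ x₂ y a b c)
    exact ⟨j, by simpa using hj⟩
  · rw [← roundsDiv_natCast_iff (Nat.mul_pos a.pos hh), Nat.cast_mul]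
    exact ((roundsDiv_natCast_iff a.pos).2 (hpb.1 a)).mul ((hy c).2.1 a)
  · rw [← roundsDiv_natCast_iff (Nat.mul_pos b.pos hh), Nat.cast_mul]
    exact ((roundsDiv_natCast_iff b.pos).2 (hpb.2.1 b)).mul ((hy c).2.2.1 b)
end

section
/- Let H be a weighted hypergraph with k vertices and H' the weighted hypergraph obtained from H by single-vertex edge hooking I, inserting a new edge {u,v} where u is a new vertex and v ∈ V(H), with weight w(u) satisfying w(u)·w(v) ≤ n. Then there exists a balanced covering array CA(n, H, ∏ g_i) if and only if there exists a balanced covering array CA(n, H', w(u)·∏ g_i). -/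
/-- `C` is a covering array of size `n` on the weighted hypergraph with hyperedge
set `E` and vertex weights `g`: rows of any 2-element hyperedge are 2-qualitatively
independent and rows of any 3-element hyperedge are 3-qualitatively independent. -/
def IsCA (n : ℕ) {V : Type} [DecidableEq V] (E : Finset (Finset V)) (g : V → ℕ)
    (C : ∀ v : V, Fin n → Fin (g v)) : Prop :=
  ∀ e ∈ E,
    (∀ u v : V, u ≠ v → e = {u, v} → QI2 (C u) (C v)) ∧
    (∀ u v w : V, u ≠ v → u ≠ w → v ≠ w → e = {u, v, w} → QI3 (C u) (C v) (C w))

/-- A balanced covering array: a covering array in which every row is balanced and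
rows corresponding to vertices in a common hyperedge are pairwise balanced. -/
def IsBalancedCA (n : ℕ) {V : Type} [DecidableEq V] (E : Finset (Finset V)) (g : V → ℕ)
    (C : ∀ v : V, Fin n → Fin (g v)) : Prop :=
  IsCA n E g C ∧ (∀ v : V, BalancedVec (C v)) ∧
    ∀ e ∈ E, ∀ u ∈ e, ∀ v ∈ e, u ≠ v → PairwiseBalancedVec (C u) (C v)

/-!
Restricting a balanced covering array on the hooked hypergraph to the old vertices gives one on
the original hypergraph, so the content lies in the converse: from the row `y` of `v` we must
build a balanced row `x` over `Fin w(u)` with `(x, y)` pairwise balanced. Qualitative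
independence then comes for free, because `w(u) g(v) ≤ n` makes every pair count at least
`⌊n / (w(u) g(v))⌋ ≥ 1`.

Sort the columns by the value of `y` and let `x` be the position in this order modulo `w(u)`.
Each symbol `b` of `y` occupies a block of `m_b ∈ {⌊n/g⌋, ⌈n/g⌉}` consecutive positions, and `m`
consecutive integers contain `⌊m/w⌋` or `⌈m/w⌉` members of each residue class modulo `w`; composing
the two roundings gives `⌊n/(wg)⌋` or `⌈n/(wg)⌉`. The row `x` itself is balanced by the same count
applied to the block of all `n` positions.
-/

open Finset

def IsNearQuotient (c n d : ℕ) : Prop := n / d ≤ c ∧ c ≤ (n + d - 1) / d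

theorem isNearQuotient_iff {c n d : ℕ} :
    IsNearQuotient c n d ↔ c = n / d ∨ c = (n + d - 1) / d := by
  rcases d.eq_zero_or_pos with rfl | hd
  · simp [IsNearQuotient]
  have hceil : (n + d - 1) / d ≤ n / d + 1 := by
    rw [← Nat.add_div_right n hd]
    exact Nat.div_le_div_right (by omega)
  constructor
  · rintro ⟨h₁, h₂⟩
    omega
  · rintro (rfl | rfl)
    · exact ⟨le_rfl, Nat.div_le_div_right (by omega)⟩
    · exact ⟨Nat.div_le_div_right (by omega), le_rfl⟩

theorem Nat.add_pred_div_add_pred_div_le {n a b : ℕ} (ha : 0 < a) (hb : 0 < b) :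
    ((n + b - 1) / b + a - 1) / a ≤ (n + a * b - 1) / (a * b) := by
  set c := (n + a * b - 1) / (a * b)
  have hn : n ≤ b * (a * c) := by
    have h : n + a * b - 1 < a * b * (c + 1) := Nat.lt_mul_div_succ _ (Nat.mul_pos ha hb)
    rw [← mul_assoc, mul_comm b a]
    rw [mul_add_one] at h
    omega
  have hb' : (n + b - 1) / b ≤ a * c := by
    rw [Nat.div_le_iff_le_mul_add_pred hb]
    omega
  rw [Nat.div_le_iff_le_mul_add_pred ha]
  omega

theorem IsNearQuotient.trans {c m n r g : ℕ} (hr : 0 < r) (hg : 0 < g)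
    (hm : IsNearQuotient m n g) (hc : IsNearQuotient c m r) : IsNearQuotient c n (r * g) := by
  constructor
  · calc n / (r * g) = n / g / r := by rw [Nat.div_div_eq_div_mul, mul_comm]
      _ ≤ m / r := Nat.div_le_div_right hm.1
      _ ≤ c := hc.1
  · calc c ≤ (m + r - 1) / r := hc.2
      _ ≤ ((n + g - 1) / g + r - 1) / r := Nat.div_le_div_right (by have := hm.2; omega)
      _ ≤ (n + r * g - 1) / (r * g) := Nat.add_pred_div_add_pred_div_le hr hg

theorem Nat.count_modEq_add_mul {r : ℕ} (hr : 0 < r) (a s q : ℕ) :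
    count (· ≡ a [MOD r]) (s + r * q) = count (· ≡ a [MOD r]) s + q := by
  have period (t : ℕ) : count (· ≡ a [MOD r]) (t + r) = count (· ≡ a [MOD r]) t + 1 := by
    simp only [count_modEq_card _ hr, add_div_right _ hr, add_mod_right]
    ring
  induction q with
  | zero => simp
  | succ q ih => rw [mul_add_one, ← add_assoc, period, ih, add_assoc]

theorem isNearQuotient_of_count_modEq_add {r : ℕ} (hr : 0 < r) {a s m c : ℕ}
    (h : Nat.count (· ≡ a [MOD r]) s + c = Nat.count (· ≡ a [MOD r]) (s + m)) :
    IsNearQuotient c m r := by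
  have hfloor : r * (m / r) ≤ m := Nat.mul_div_le m r
  have hceil : m ≤ r * ((m + r - 1) / r) := by
    have := Nat.div_add_mod (m + r - 1) r
    have := Nat.mod_lt (m + r - 1) hr
    omega
  have hlo := Nat.count_monotone (· ≡ a [MOD r]) (Nat.add_le_add_left hfloor s)
  have hhi := Nat.count_monotone (· ≡ a [MOD r]) (Nat.add_le_add_left hceil s)
  rw [Nat.count_modEq_add_mul hr] at hlo hhi
  exact ⟨by omega, by omega⟩

theorem card_filter_val_lt_eq_count {n L : ℕ} (hL : L ≤ n) (P : ℕ → Prop) [DecidablePred P] :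
    #{k : Fin n | P k ∧ (k : ℕ) < L} = Nat.count P L := by
  rw [Nat.count_eq_card_filter_range]
  refine card_bij (fun k _ => k) (fun k hk => ?_) (fun _ _ _ _ => Fin.ext)
    (fun t ht => ⟨⟨t, ?_⟩, ?_, rfl⟩)
  · simp only [mem_filter, mem_univ, true_and] at hk
    simp [hk.1, hk.2]
  · simp only [mem_filter, mem_range] at ht
    omega
  · simp only [mem_filter, mem_range] at ht
    simp [ht.1, ht.2]

/-- The positions where a sorted tuple takes the value `b` form the block
`[#{f < b}, #{f ≤ b})`. -/
theorem Monotone.card_filter_eq_add_count {n : ℕ} {α : Type*} [LinearOrder α] {f : Fin n → α}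
    (hf : Monotone f) (P : ℕ → Prop) [DecidablePred P] (b : α) :
    #{k : Fin n | P k ∧ f k = b} + Nat.count P #{i | f i < b} = Nat.count P #{i | f i ≤ b} := by
  have hlt : #{k : Fin n | P k ∧ f k < b} = Nat.count P #{i | f i < b} := by
    rw [← card_filter_val_lt_eq_count ((card_filter_le _ _).trans_eq (card_fin n))]
    simp_rw [Tuple.lt_card_lt_iff_apply_lt_of_monotone hf]
  have hle : #{k : Fin n | P k ∧ f k ≤ b} = Nat.count P #{i | f i ≤ b} := by
    rw [← card_filter_val_lt_eq_count ((card_filter_le _ _).trans_eq (card_fin n))]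
    simp_rw [Tuple.lt_card_le_iff_apply_le_of_monotone hf]
  have hdisj : Disjoint (α := Finset (Fin n)) {k | P k ∧ f k = b} {k | P k ∧ f k < b} :=
    disjoint_filter.2 fun k _ h h' => (h'.2.trans_eq h.2.symm).false
  rw [← hlt, ← hle, ← card_union_of_disjoint hdisj, ← filter_or]
  congr 1
  ext k
  simp only [mem_filter, le_iff_eq_or_lt]
  tauto
section Rows

variable {n g₁ g₂ : ℕ} {x : Fin n → Fin g₁} {y : Fin n → Fin g₂}

theorem countPair_comm (a : Fin g₁) (b : Fin g₂) :
    countPair y x b a = countPair x y a b := by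
  simp only [countPair, and_comm]

theorem QI2.symm (h : QI2 x y) : QI2 y x :=
  fun b a => (h a b).imp fun _ => And.symm

theorem PairwiseBalancedVec.symm (h : PairwiseBalancedVec x y) : PairwiseBalancedVec y x := by
  obtain ⟨hx, hy, hxy⟩ := h
  refine ⟨hy, hx, fun b a => ?_⟩
  rw [countPair_comm, mul_comm]
  exact hxy a b

theorem PairwiseBalancedVec.qi2 (h : PairwiseBalancedVec x y) (hn : g₁ * g₂ ≤ n) : QI2 x y := by
  intro a b
  have hg : 0 < g₁ * g₂ := Nat.mul_pos a.pos b.pos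
  have hpos : 0 < countPair x y a b :=
    lt_of_lt_of_le ((Nat.one_le_div_iff hg).2 hn) (isNearQuotient_iff.2 (h.2.2 a b)).1
  obtain ⟨j, hj⟩ := card_pos.1 hpos
  exact ⟨j, (mem_filter.1 hj).2⟩

theorem countVal_comp_perm (σ : Equiv.Perm (Fin n)) (a : Fin g₁) :
    countVal (x ∘ σ) a = countVal x a :=
  card_equiv σ (by simp)

theorem countPair_comp_perm (σ : Equiv.Perm (Fin n)) (a : Fin g₁) (b : Fin g₂) :
    countPair (x ∘ σ) (y ∘ σ) a b = countPair x y a b :=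
  card_equiv σ (by simp)

theorem BalancedVec.comp_perm (h : BalancedVec x) (σ : Equiv.Perm (Fin n)) :
    BalancedVec (x ∘ σ) := by
  intro a
  rw [countVal_comp_perm]
  exact h a

theorem PairwiseBalancedVec.comp_perm (h : PairwiseBalancedVec x y) (σ : Equiv.Perm (Fin n)) :
    PairwiseBalancedVec (x ∘ σ) (y ∘ σ) := by
  refine ⟨h.1.comp_perm σ, h.2.1.comp_perm σ, fun a b => ?_⟩
  rw [countPair_comp_perm]
  exact h.2.2 a b

end Rows

theorem Monotone.pairwiseBalancedVec_mod {n r g : ℕ} (hr : 0 < r) {f : Fin n → Fin g}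
    (hf : Monotone f) (hfb : BalancedVec f) :
    PairwiseBalancedVec (fun k : Fin n => (⟨k % r, Nat.mod_lt _ hr⟩ : Fin r)) f := by
  have hmod (a : Fin r) (k : Fin n) :
      (⟨k % r, Nat.mod_lt _ hr⟩ : Fin r) = a ↔ (k : ℕ) ≡ a [MOD r] := by
    rw [Fin.ext_iff, Nat.ModEq, Nat.mod_eq_of_lt a.isLt]
  refine ⟨fun a => isNearQuotient_iff.1 ?_, hfb, fun a b => isNearQuotient_iff.1 ?_⟩
  · apply isNearQuotient_of_count_modEq_add hr (a := a) (s := 0)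
    rw [Nat.count_zero, zero_add, zero_add, ← card_filter_val_lt_eq_count le_rfl]
    simp [countVal, hmod]
  · have hm := hf.card_filter_eq_add_count (fun _ => True) b
    simp only [true_and, Nat.count_true] at hm
    refine (isNearQuotient_iff.2 (hfb b)).trans hr b.pos
      (isNearQuotient_of_count_modEq_add hr (a := a) (s := #{i | f i < b}) ?_)
    calc _ = #{k : Fin n | (k : ℕ) ≡ a [MOD r] ∧ f k = b}
          + Nat.count (· ≡ a [MOD r]) #{i | f i < b} := by
          rw [add_comm]; simp [countPair, hmod]
      _ = Nat.count (· ≡ a [MOD r]) #{i | f i ≤ b} :=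
          hf.card_filter_eq_add_count (· ≡ a [MOD r]) b
      _ = _ := by rw [← hm, add_comm]; rfl

theorem BalancedVec.exists_pairwiseBalancedVec {n r g : ℕ} (hr : 0 < r) {y : Fin n → Fin g}
    (hy : BalancedVec y) : ∃ x : Fin n → Fin r, PairwiseBalancedVec x y := by
  have hsorted := (Tuple.monotone_sort y).pairwiseBalancedVec_mod hr (hy.comp_perm (Tuple.sort y))
  refine ⟨(fun k : Fin n => (⟨k % r, Nat.mod_lt _ hr⟩ : Fin r)) ∘ (Tuple.sort y).symm, ?_⟩
  convert hsorted.comp_perm (Tuple.sort y).symm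
  ext k
  simp

def PairwiseBalancedOn (n : ℕ) {V : Type} (E : Finset (Finset V)) (g : V → ℕ)
    (C : ∀ v : V, Fin n → Fin (g v)) : Prop :=
  ∀ e ∈ E, ∀ u ∈ e, ∀ v ∈ e, u ≠ v → PairwiseBalancedVec (C u) (C v)

section Hypergraph

variable {n : ℕ} {V W : Type}

theorem isBalancedCA_iff [DecidableEq V] {E : Finset (Finset V)} {g : V → ℕ}
    {C : ∀ v, Fin n → Fin (g v)} :
    IsBalancedCA n E g C ↔
      IsCA n E g C ∧ (∀ v, BalancedVec (C v)) ∧ PairwiseBalancedOn n E g C :=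
  Iff.rfl

theorem isCA_union [DecidableEq V] {E₁ E₂ : Finset (Finset V)} {g : V → ℕ}
    {C : ∀ v, Fin n → Fin (g v)} :
    IsCA n (E₁ ∪ E₂) g C ↔ IsCA n E₁ g C ∧ IsCA n E₂ g C := by
  simp only [IsCA, mem_union, or_imp, forall_and]
  exact and_and_and_comm

theorem pairwiseBalancedOn_union [DecidableEq V] {E₁ E₂ : Finset (Finset V)} {g : V → ℕ}
    {C : ∀ v, Fin n → Fin (g v)} :
    PairwiseBalancedOn n (E₁ ∪ E₂) g C ↔
      PairwiseBalancedOn n E₁ g C ∧ PairwiseBalancedOn n E₂ g C := by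
  simp only [PairwiseBalancedOn, mem_union, or_imp, forall_and]

theorem isCA_image [DecidableEq V] [DecidableEq W] {φ : V → W} (hφ : Function.Injective φ)
    {E : Finset (Finset V)} {g : W → ℕ} {C : ∀ w, Fin n → Fin (g w)} :
    IsCA n (E.image (image φ)) g C ↔ IsCA n E (fun v => g (φ v)) (fun v => C (φ v)) := by
  simp only [IsCA, forall_mem_image]
  refine forall₂_congr fun e _ => and_congr ⟨fun h u v huv he => ?_, fun h u v huv he => ?_⟩
    ⟨fun h u v w huv huw hvw he => ?_, fun h u v w huv huw hvw he => ?_⟩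
  · exact h (φ u) (φ v) (hφ.ne huv) (by simp [he])
  · obtain ⟨u, -, rfl⟩ := mem_image.1 (he ▸ mem_insert_self u {v})
    obtain ⟨v, -, rfl⟩ := mem_image.1 (he ▸ mem_insert_of_mem (mem_singleton_self v))
    exact h u v (ne_of_apply_ne φ huv) (image_injective hφ (by simp [he]))
  · exact h (φ u) (φ v) (φ w) (hφ.ne huv) (hφ.ne huw) (hφ.ne hvw) (by simp [he])
  · obtain ⟨u, -, rfl⟩ := mem_image.1 (he ▸ mem_insert_self u {v, w})
    obtain ⟨v, -, rfl⟩ := mem_image.1 (he ▸ mem_insert_of_mem (mem_insert_self v {w}))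
    obtain ⟨w, -, rfl⟩ :=
      mem_image.1 (he ▸ mem_insert_of_mem (mem_insert_of_mem (mem_singleton_self w)))
    exact h u v w (ne_of_apply_ne φ huv) (ne_of_apply_ne φ huw) (ne_of_apply_ne φ hvw)
      (image_injective hφ (by simp [he]))

theorem pairwiseBalancedOn_image [DecidableEq W] {φ : V → W} (hφ : Function.Injective φ)
    {E : Finset (Finset V)} {g : W → ℕ} {C : ∀ w, Fin n → Fin (g w)} :
    PairwiseBalancedOn n (E.image (image φ)) g C ↔
      PairwiseBalancedOn n E (fun v => g (φ v)) (fun v => C (φ v)) := by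
  simp [PairwiseBalancedOn, hφ.ne_iff]

theorem isCA_pair [DecidableEq V] {u v : V} (huv : u ≠ v) {g : V → ℕ}
    {C : ∀ v, Fin n → Fin (g v)} :
    IsCA n {{u, v}} g C ↔ QI2 (C u) (C v) := by
  refine ⟨fun h => (h _ (mem_singleton_self _)).1 u v huv rfl, fun h => ?_⟩
  simp only [IsCA, mem_singleton, forall_eq]
  refine ⟨fun u' v' huv' he => ?_, fun u' v' w' h₁ h₂ h₃ he => ?_⟩
  · have hu' : u' ∈ ({u, v} : Finset V) := he ▸ mem_insert_self _ _
    have hv' : v' ∈ ({u, v} : Finset V) := he ▸ mem_insert_of_mem (mem_singleton_self _)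
    simp only [mem_insert, mem_singleton] at hu' hv'
    rcases hu' with rfl | rfl <;> rcases hv' with rfl | rfl
    all_goals first | exact absurd rfl huv' | exact h | exact h.symm
  · have := congrArg card he
    rw [card_pair huv, card_eq_three.2 ⟨u', v', w', h₁, h₂, h₃, rfl⟩] at this
    omega

theorem pairwiseBalancedOn_pair [DecidableEq V] {u v : V} (huv : u ≠ v) {g : V → ℕ}
    {C : ∀ v, Fin n → Fin (g v)} :
    PairwiseBalancedOn n {{u, v}} g C ↔ PairwiseBalancedVec (C u) (C v) := by
  refine ⟨fun h => h _ (mem_singleton_self _) u (by simp) v (by simp) huv, fun h => ?_⟩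
  simp only [PairwiseBalancedOn, mem_singleton, forall_eq, mem_insert]
  rintro u' (rfl | rfl) v' (rfl | rfl) huv'
  all_goals first | exact absurd rfl huv' | exact h | exact h.symm

theorem isBalancedCA_hook_iff [DecidableEq V] {E : Finset (Finset V)} {g : Option V → ℕ} {v : V}
    {C : ∀ o, Fin n → Fin (g o)} :
    IsBalancedCA n (E.image (image some) ∪ {{none, some v}}) g C ↔
      IsBalancedCA n E (fun a => g (some a)) (fun a => C (some a)) ∧
        PairwiseBalancedVec (C none) (C (some v)) ∧ QI2 (C none) (C (some v)) := by
  have hv : (none : Option V) ≠ some v := nofun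
  rw [isBalancedCA_iff, isBalancedCA_iff, isCA_union, isCA_image (Option.some_injective V),
    isCA_pair hv, pairwiseBalancedOn_union, pairwiseBalancedOn_image (Option.some_injective V),
    pairwiseBalancedOn_pair hv, Option.forall]
  constructor
  · rintro ⟨⟨hE, hq⟩, ⟨-, hb⟩, hpE, hp⟩
    exact ⟨⟨hE, hb, hpE⟩, hp, hq⟩
  · rintro ⟨⟨hE, hb, hpE⟩, hp, hq⟩
    exact ⟨⟨hE, hq⟩, ⟨hp.1, hb⟩, hpE, hp⟩

end Hypergraph

/-- Single-vertex edge hooking I: insert a new edge `{u, v}` where `u` is a new vertex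
(modelled as `none : Option V`) and `v` is an existing vertex. -/
theorem stmt6 {V : Type} [DecidableEq V] (n : ℕ) (E : Finset (Finset V)) (g : V → ℕ)
    (v : V) (wu : ℕ) (hwu : 0 < wu) (hle : wu * g v ≤ n) :
    (∃ C : ∀ x : V, Fin n → Fin (g x), IsBalancedCA n E g C) ↔
    (∃ C' : ∀ x : Option V, Fin n → Fin (Option.elim x wu g),
       IsBalancedCA n
         (E.image (Finset.image Option.some) ∪ {({none, some v} : Finset (Option V))})
         (fun x => Option.elim x wu g) C') := by
  constructor
  · rintro ⟨C, hC⟩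
    obtain ⟨x, hx⟩ := (hC.2.1 v).exists_pairwiseBalancedVec hwu
    exact ⟨fun | none => x | some a => C a, isBalancedCA_hook_iff.2 ⟨hC, hx, hx.qi2 hle⟩⟩
  · rintro ⟨C', hC'⟩
    exact ⟨_, (isBalancedCA_hook_iff.1 hC').1⟩
end

section
/- Let F₀ and F₁ be two matchings in a graph with |F₁| ≥ |F₀| + 2. Then the symmetric difference F₀ △ F₁ contains a path component with more F₁-edges than F₀-edges, and swapping the F₁-edges with the F₀-edges along this path yields matchings F₀', F₁' with |F₀'| = |F₀| + 1 and |F₁'| = |F₁| − 1. -/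
/-! Put `A = F₀ \ F₁` and `B = F₁ \ F₀`, disjoint matchings with `|A| < |B|`. Then `B` covers more
vertices than `A`, so some vertex `v₀` is covered by `B` but not by `A`. Growing an alternating
path from `v₀`, starting with its `B`-edge, until it cannot be extended yields a component of
`A ∪ B` in which the `B`-edges outnumber the `A`-edges by at most one. If they do by exactly one,
this is the path sought; otherwise discarding the component keeps `|A| < |B|`, and we recurse.
Since the path is a whole component, swapping along it leaves both edge sets matchings. -/

/-- A matching, given as a finite set of (non-loop) edges of a graph on `V`,
no two of which share a vertex. -/
def IsGraphMatching {V : Type} (F : Finset (Sym2 V)) : Prop :=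
  (∀ e ∈ F, ¬ e.IsDiag) ∧ ∀ e ∈ F, ∀ f ∈ F, e ≠ f → ∀ v : V, v ∈ e → v ∉ f

/-- A finite edge set forming a (simple) path: the edges are exactly the
consecutive pairs of a duplicate-free list of vertices. -/
def IsPathEdgeSet {V : Type} [DecidableEq V] (P : Finset (Sym2 V)) : Prop :=
  ∃ l : List V, l.Nodup ∧ P = ((l.zip l.tail).map (fun p => s(p.1, p.2))).toFinset

open Finset

variable {V : Type}

/-- For `P ⊆ S`: `P` is a union of connected components of the edge set `S`. -/
def IsIsolatedIn (P S : Finset (Sym2 V)) : Prop :=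
  ∀ e ∈ S, e ∉ P → ∀ f ∈ P, ∀ v : V, v ∈ e → v ∉ f

section Basic

variable {F P S T : Finset (Sym2 V)}

theorem IsGraphMatching.eq_of_mem (h : IsGraphMatching F) {e f : Sym2 V} (he : e ∈ F)
    (hf : f ∈ F) {v : V} (hve : v ∈ e) (hvf : v ∈ f) : e = f := by
  by_contra hne
  exact h.2 e he f hf hne v hve hvf

theorem IsGraphMatching.mono (h : IsGraphMatching F) (hsub : P ⊆ F) : IsGraphMatching P :=
  ⟨fun e he => h.1 e (hsub he), fun e he f hf => h.2 e (hsub he) f (hsub hf)⟩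

theorem IsIsolatedIn.mono (h : IsIsolatedIn P S) (hsub : T ⊆ S) : IsIsolatedIn P T :=
  fun e he => h e (hsub he)

end Basic

variable [DecidableEq V]

section Matching

variable {F F₀ F₁ A B P Q S : Finset (Sym2 V)}

theorem IsIsolatedIn.of_sdiff (hQ : IsIsolatedIn Q (S \ P)) (hP : IsIsolatedIn P S)
    (hQS : Q ⊆ S \ P) : IsIsolatedIn Q S := by
  intro e he heQ f hf v hve hvf
  by_cases heP : e ∈ P
  · exact hP f (mem_sdiff.1 (hQS hf)).1 (mem_sdiff.1 (hQS hf)).2 e heP v hvf hve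
  · exact hQ e (mem_sdiff.2 ⟨he, heP⟩) heQ f hf v hve hvf

theorem IsGraphMatching.sdiff_union_inter (h₀ : IsGraphMatching F₀) (h₁ : IsGraphMatching F₁)
    (hP : IsIsolatedIn P (F₀ \ F₁)) : IsGraphMatching ((F₀ \ P) ∪ (F₁ ∩ P)) := by
  have mixed : ∀ e ∈ F₀ \ P, ∀ f ∈ F₁ ∩ P, ∀ v : V, v ∈ e → v ∈ f → e = f := by
    intro e he f hf v hve hvf
    rw [mem_sdiff] at he
    rw [mem_inter] at hf
    by_cases he₁ : e ∈ F₁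
    · exact h₁.eq_of_mem he₁ hf.1 hve hvf
    · exact absurd hvf (hP e (mem_sdiff.2 ⟨he.1, he₁⟩) he.2 f hf.2 v hve)
  refine ⟨fun e he => ?_, fun e he f hf hne v hve hvf => hne ?_⟩
  · rcases mem_union.1 he with he | he
    exacts [h₀.1 e (mem_sdiff.1 he).1, h₁.1 e (mem_inter.1 he).1]
  · rcases mem_union.1 he with he | he <;> rcases mem_union.1 hf with hf | hf
    · exact h₀.eq_of_mem (mem_sdiff.1 he).1 (mem_sdiff.1 hf).1 hve hvf
    · exact mixed e he f hf v hve hvf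
    · exact (mixed f hf e he v hvf hve).symm
    · exact h₁.eq_of_mem (mem_inter.1 he).1 (mem_inter.1 hf).1 hve hvf

theorem card_sdiff_union_inter (F₀ F₁ P : Finset (Sym2 V)) :
    ((F₀ \ P) ∪ (F₁ ∩ P)).card + (P ∩ F₀).card = F₀.card + (P ∩ F₁).card := by
  have hdisj : Disjoint (F₀ \ P) (F₁ ∩ P) :=
    disjoint_sdiff_self_left.mono_right inter_subset_right
  rw [card_union_of_disjoint hdisj, inter_comm P F₀, inter_comm P F₁, add_right_comm,
    card_sdiff_add_card_inter]

theorem inter_eq_inter_sdiff_of_subset (h : P ⊆ (F₀ \ F₁) ∪ (F₁ \ F₀)) :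
    P ∩ F₀ = P ∩ (F₀ \ F₁) := by
  ext e
  have := @h e
  simp only [mem_inter, mem_sdiff, mem_union] at this ⊢
  tauto

theorem IsGraphMatching.card_biUnion_toFinset (h : IsGraphMatching F) :
    (F.biUnion Sym2.toFinset).card = 2 * F.card := by
  rw [card_biUnion fun e he f hf hne => disjoint_left.2 fun v hve hvf =>
      h.2 e he f hf hne v (Sym2.mem_toFinset.1 hve) (Sym2.mem_toFinset.1 hvf),
    sum_congr rfl fun e he => Sym2.card_toFinset_of_not_isDiag e (h.1 e he), sum_const,
    smul_eq_mul, mul_comm]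

theorem IsGraphMatching.exists_vertex_not_covered (hB : IsGraphMatching B)
    (hcard : A.card < B.card) : ∃ e ∈ B, ∃ v ∈ e, ∀ f ∈ A, v ∉ f := by
  have hA : (A.biUnion Sym2.toFinset).card ≤ 2 * A.card := by
    rw [mul_comm]
    exact card_biUnion_le_card_mul A _ 2 fun e _ => by
      rw [Sym2.card_toFinset]; split_ifs <;> omega
  have hnsub : ¬ B.biUnion Sym2.toFinset ⊆ A.biUnion Sym2.toFinset := fun hsub => by
    have := card_le_card hsub
    rw [hB.card_biUnion_toFinset] at this
    omega
  obtain ⟨v, hvB, hvA⟩ := not_subset.1 hnsub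
  obtain ⟨e, he, hve⟩ := mem_biUnion.1 hvB
  exact ⟨e, he, v, Sym2.mem_toFinset.1 hve, fun f hf hvf =>
    hvA (mem_biUnion.2 ⟨f, hf, Sym2.mem_toFinset.2 hvf⟩)⟩

end Matching

section Path

def pathEdges (l : List V) : Finset (Sym2 V) :=
  ((l.zip l.tail).map fun p => s(p.1, p.2)).toFinset

theorem pathEdges_cons_cons (u v : V) (t : List V) :
    pathEdges (u :: v :: t) = insert s(u, v) (pathEdges (v :: t)) := by
  simp [pathEdges]

theorem pathEdges_pair (u v : V) : pathEdges [u, v] = {s(u, v)} := by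
  simp [pathEdges]

theorem mem_of_mem_pathEdges {l : List V} {e : Sym2 V} (he : e ∈ pathEdges l) {v : V}
    (hv : v ∈ e) : v ∈ l := by
  induction l with
  | nil => simp [pathEdges] at he
  | cons u t ih =>
    cases t with
    | nil => simp [pathEdges] at he
    | cons w r =>
      rw [pathEdges_cons_cons, mem_insert] at he
      rcases he with rfl | he
      · rcases Sym2.mem_iff.1 hv with rfl | rfl <;> simp
      · exact List.mem_cons_of_mem _ (ih he)

theorem eq_of_mem_pathEdges_of_head_mem {u v : V} {t : List V} (hnd : (u :: v :: t).Nodup)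
    {e : Sym2 V} (he : e ∈ pathEdges (u :: v :: t)) (hu : u ∈ e) : e = s(u, v) := by
  rw [pathEdges_cons_cons, mem_insert] at he
  exact he.resolve_right fun he => (List.nodup_cons.1 hnd).1 (mem_of_mem_pathEdges he hu)

/-- The path `u :: v :: t` is grown at its head `u`, alternating between `L` and `N`, and its last
edge `s(u, v)` lies in `L`. The only edge of `N ∪ L` that may meet it without lying on it is an
`N`-edge at `u`. -/
structure IsAltPath (N L : Finset (Sym2 V)) (u v : V) (t : List V) : Prop where
  nodup : (u :: v :: t).Nodup
  head_mem : s(u, v) ∈ L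
  subset : pathEdges (u :: v :: t) ⊆ N ∪ L
  mem_pathEdges : ∀ x ∈ u :: v :: t, ∀ e ∈ N ∪ L, x ∈ e →
    e ∈ pathEdges (u :: v :: t) ∨ (x = u ∧ e ∈ N)
  card_le : (pathEdges (u :: v :: t) ∩ N).card ≤ (pathEdges (u :: v :: t) ∩ L).card
  card_le_succ : (pathEdges (u :: v :: t) ∩ L).card ≤ (pathEdges (u :: v :: t) ∩ N).card + 1

variable {N L : Finset (Sym2 V)}

theorem IsAltPath.pair (hL : IsGraphMatching L) (hNL : Disjoint N L) {v₀ v₁ : V}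
    (he : s(v₀, v₁) ∈ L) (hv₀ : ∀ e ∈ N, v₀ ∉ e) : IsAltPath N L v₁ v₀ [] := by
  rw [Sym2.eq_swap] at he
  have hP : pathEdges [v₁, v₀] = {s(v₁, v₀)} := pathEdges_pair v₁ v₀
  refine ⟨?_, he, ?_, ?_, ?_, ?_⟩
  · have : v₁ ≠ v₀ := fun h => hL.1 _ he (Sym2.mk_isDiag_iff.2 h)
    simpa using this
  · rw [hP]
    exact singleton_subset_iff.2 (mem_union_right _ he)
  · intro x hx e heNL hxe
    rcases mem_union.1 heNL with heN | heL
    · rcases List.mem_pair.1 hx with rfl | rfl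
      · exact Or.inr ⟨rfl, heN⟩
      · exact absurd hxe (hv₀ e heN)
    · have hx' : x ∈ s(v₁, v₀) := by
        rcases List.mem_pair.1 hx with rfl | rfl <;> simp
      rw [hP, mem_singleton]
      exact Or.inl (hL.eq_of_mem heL he hxe hx')
  · rw [hP, singleton_inter_of_notMem (disjoint_right.1 hNL he)]
    simp
  · rw [hP, singleton_inter_of_mem he]
    simp

theorem IsAltPath.cons (hN : IsGraphMatching N) (hNL : Disjoint N L) {u v w : V} {t : List V}
    (h : IsAltPath N L u v t) (hw : s(u, w) ∈ N) : IsAltPath L N w u (v :: t) := by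
  have hwl : w ∉ u :: v :: t := by
    intro hw'
    rcases h.mem_pathEdges w hw' _ (mem_union_left _ hw) (Sym2.mem_mk_right _ _) with
      he | ⟨rfl, -⟩
    · rw [eq_of_mem_pathEdges_of_head_mem h.nodup he (Sym2.mem_mk_left _ _)] at hw
      exact disjoint_left.1 hNL hw h.head_mem
    · exact hN.1 _ hw (Sym2.mk_isDiag_iff.2 rfl)
  have hwu : s(w, u) ∈ N := Sym2.eq_swap ▸ hw
  have hnew : s(w, u) ∉ pathEdges (u :: v :: t) := fun he =>
    hwl (mem_of_mem_pathEdges he (Sym2.mem_mk_left _ _))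
  have hinterL : pathEdges (w :: u :: v :: t) ∩ L = pathEdges (u :: v :: t) ∩ L := by
    rw [pathEdges_cons_cons, insert_inter_of_notMem (disjoint_left.1 hNL hwu)]
  have hcardN : (pathEdges (w :: u :: v :: t) ∩ N).card =
      (pathEdges (u :: v :: t) ∩ N).card + 1 := by
    rw [pathEdges_cons_cons, insert_inter_of_mem hwu,
      card_insert_of_notMem fun h' => hnew (mem_inter.1 h').1]
  refine ⟨List.nodup_cons.2 ⟨hwl, h.nodup⟩, hwu, ?_, ?_, ?_, ?_⟩
  · rw [pathEdges_cons_cons, union_comm]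
    exact insert_subset (mem_union_left _ hwu) h.subset
  · intro x hx e he hxe
    rw [union_comm] at he
    rw [pathEdges_cons_cons, mem_insert]
    rcases List.mem_cons.1 hx with rfl | hx
    · by_cases heN : e ∈ N
      · exact Or.inl (Or.inl (hN.eq_of_mem heN hwu hxe (Sym2.mem_mk_left _ _)))
      · exact Or.inr ⟨rfl, (mem_union.1 he).resolve_left heN⟩
    · rcases h.mem_pathEdges x hx e he hxe with he' | ⟨rfl, heN⟩
      · exact Or.inl (Or.inr he')
      · exact Or.inl (Or.inl (hN.eq_of_mem heN hwu hxe (Sym2.mem_mk_right _ _)))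
  · rw [hinterL, hcardN]
    exact h.card_le_succ
  · rw [hinterL, hcardN]
    exact Nat.succ_le_succ h.card_le

theorem IsAltPath.isIsolatedIn {u v : V} {t : List V} (h : IsAltPath N L u v t)
    (hu : ∀ e ∈ N, u ∉ e) : IsIsolatedIn (pathEdges (u :: v :: t)) (N ∪ L) := by
  intro e he heP f hf x hxe hxf
  rcases h.mem_pathEdges x (mem_of_mem_pathEdges hf hxf) e he hxe with he' | ⟨rfl, heN⟩
  exacts [heP he', hu e heN hxe]

theorem IsAltPath.exists_isIsolatedIn (hN : IsGraphMatching N) (hL : IsGraphMatching L)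
    (hNL : Disjoint N L) {u v : V} {t : List V} (h : IsAltPath N L u v t) :
    ∃ P ⊆ N ∪ L, IsPathEdgeSet P ∧ IsIsolatedIn P (N ∪ L) ∧ P.Nonempty ∧
      (P ∩ L).card ≤ (P ∩ N).card + 1 ∧ (P ∩ N).card ≤ (P ∩ L).card + 1 := by
  induction hn : ((N ∪ L) \ pathEdges (u :: v :: t)).card using Nat.strong_induction_on
    generalizing N L u v t with
  | _ n ih =>
  by_cases hu : ∃ e ∈ N, u ∈ e
  swap
  · refine ⟨_, h.subset, ⟨_, h.nodup, rfl⟩, h.isIsolatedIn fun e he hue => hu ⟨e, he, hue⟩,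
      ⟨s(u, v), ?_⟩, h.card_le_succ, by have := h.card_le; omega⟩
    rw [pathEdges_cons_cons]
    exact mem_insert_self _ _
  obtain ⟨e, heN, hue⟩ := hu
  obtain ⟨w, rfl⟩ := Sym2.mem_iff_exists.1 hue
  have h' := h.cons hN hNL heN
  have hlt : ((L ∪ N) \ pathEdges (w :: u :: v :: t)).card < n := by
    rw [← hn, union_comm, pathEdges_cons_cons, sdiff_insert]
    refine card_lt_card (erase_ssubset (mem_sdiff.2 ⟨mem_union_left _ h'.head_mem, ?_⟩))
    exact fun he => (List.nodup_cons.1 h'.nodup).1 (mem_of_mem_pathEdges he (Sym2.mem_mk_left _ _))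
  obtain ⟨P, hPsub, hPpath, hPiso, hPne, h₁, h₂⟩ := ih _ hlt hL hN hNL.symm h' rfl
  rw [union_comm] at hPsub hPiso
  exact ⟨P, hPsub, hPpath, hPiso, hPne, h₂, h₁⟩

end Path

variable {A B : Finset (Sym2 V)}

theorem exists_augmenting_path_of_disjoint (hA : IsGraphMatching A) (hB : IsGraphMatching B)
    (hAB : Disjoint A B) (hcard : A.card < B.card) :
    ∃ P ⊆ A ∪ B, IsPathEdgeSet P ∧ IsIsolatedIn P (A ∪ B) ∧ (P ∩ B).card = (P ∩ A).card + 1 := by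
  induction hn : (A ∪ B).card using Nat.strong_induction_on generalizing A B with
  | _ n ih =>
  obtain ⟨e, heB, v₀, hv₀e, hv₀A⟩ := hB.exists_vertex_not_covered hcard
  obtain ⟨v₁, rfl⟩ := Sym2.mem_iff_exists.1 hv₀e
  obtain ⟨P, hPsub, hPpath, hPiso, hPne, hPcard, -⟩ :=
    (IsAltPath.pair hB hAB heB hv₀A).exists_isIsolatedIn hA hB hAB
  by_cases hP : (P ∩ B).card = (P ∩ A).card + 1
  · exact ⟨P, hPsub, hPpath, hPiso, hP⟩
  have hrest : (A \ P) ∪ (B \ P) = (A ∪ B) \ P := (union_sdiff_distrib A B P).symm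
  have hcard' : (A \ P).card < (B \ P).card := by
    have hsplitA := card_sdiff_add_card_inter A P
    have hsplitB := card_sdiff_add_card_inter B P
    rw [inter_comm] at hsplitA hsplitB
    omega
  obtain ⟨Q, hQsub, hQpath, hQiso, hQcard⟩ :=
    ih _ (hn ▸ hrest ▸ card_lt_card (sdiff_ssubset hPsub hPne)) (hA.mono sdiff_subset)
      (hB.mono sdiff_subset) (hAB.mono sdiff_subset sdiff_subset) hcard' rfl
  rw [hrest] at hQsub hQiso
  have hQP : Disjoint Q P := disjoint_of_subset_left hQsub sdiff_disjoint
  have hQ_inter : ∀ F, Q ∩ (F \ P) = Q ∩ F := fun F => by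
    rw [← inter_sdiff_assoc, (hQP.mono_left inter_subset_left).sdiff_eq_left]
  rw [hQ_inter, hQ_inter] at hQcard
  exact ⟨Q, hQsub.trans sdiff_subset, hQpath, hQiso.of_sdiff hPiso hQsub, hQcard⟩

theorem exists_augmenting_path {F₀ F₁ : Finset (Sym2 V)} (h₀ : IsGraphMatching F₀)
    (h₁ : IsGraphMatching F₁) (hcard : F₀.card < F₁.card) :
    ∃ P ⊆ (F₀ \ F₁) ∪ (F₁ \ F₀), IsPathEdgeSet P ∧ IsIsolatedIn P ((F₀ \ F₁) ∪ (F₁ \ F₀)) ∧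
      (P ∩ F₁).card = (P ∩ F₀).card + 1 := by
  have hlt : (F₀ \ F₁).card < (F₁ \ F₀).card := by
    have := card_sdiff_add_card_inter F₀ F₁
    have := card_sdiff_add_card_inter F₁ F₀
    rw [inter_comm F₁] at this
    omega
  obtain ⟨P, hPsub, hPpath, hPiso, hPcard⟩ := exists_augmenting_path_of_disjoint
    (h₀.mono sdiff_subset) (h₁.mono sdiff_subset) disjoint_sdiff_sdiff hlt
  refine ⟨P, hPsub, hPpath, hPiso, ?_⟩
  rw [inter_eq_inter_sdiff_of_subset hPsub,
    inter_eq_inter_sdiff_of_subset (union_comm (F₀ \ F₁) _ ▸ hPsub)]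
  exact hPcard

/-- If `|F₁| ≥ |F₀| + 2`, the symmetric difference `F₀ △ F₁` contains a path
component `P` with more `F₁`-edges than `F₀`-edges, and swapping the `F₁`-edges
with the `F₀`-edges along `P` yields matchings `F₀'`, `F₁'` with
`|F₀'| = |F₀| + 1` and `|F₁'| = |F₁| − 1`. -/
theorem stmt17 {V : Type} [DecidableEq V] (F₀ F₁ : Finset (Sym2 V))
    (h₀ : IsGraphMatching F₀) (h₁ : IsGraphMatching F₁)
    (hcard : F₀.card + 2 ≤ F₁.card) :
    ∃ P : Finset (Sym2 V),
      P ⊆ (F₀ \ F₁) ∪ (F₁ \ F₀) ∧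
      IsPathEdgeSet P ∧
      (∀ e ∈ (F₀ \ F₁) ∪ (F₁ \ F₀), e ∉ P → ∀ f ∈ P, ∀ v : V, v ∈ e → v ∉ f) ∧
      (P ∩ F₀).card < (P ∩ F₁).card ∧
      IsGraphMatching ((F₀ \ P) ∪ (F₁ ∩ P)) ∧
      IsGraphMatching ((F₁ \ P) ∪ (F₀ ∩ P)) ∧
      ((F₀ \ P) ∪ (F₁ ∩ P)).card = F₀.card + 1 ∧
      ((F₁ \ P) ∪ (F₀ ∩ P)).card = F₁.card - 1 := by
  obtain ⟨P, hPsub, hPpath, hPiso, hPcard⟩ := exists_augmenting_path h₀ h₁ (by omega)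
  have hcard₀ := card_sdiff_union_inter F₀ F₁ P
  have hcard₁ := card_sdiff_union_inter F₁ F₀ P
  exact ⟨P, hPsub, hPpath, hPiso, by omega,
    h₀.sdiff_union_inter h₁ (hPiso.mono subset_union_left),
    h₁.sdiff_union_inter h₀ (hPiso.mono subset_union_right), by omega, by omega⟩
end
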